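/- For every natural number n ≥ 1, it is not the case that Pn(G_n) ≤ P_{n−1}(G_{n−1}). -/

import Mathlib

universe u

namespace SetTheory

/-- Pre-games (as in the older Mathlib's `SetTheory.PGame`, no longer in Mathlib). -/
inductive PGame : Type (u + 1)
  | mk : ∀ α β : Type u, (α → PGame) → (β → PGame) → PGame

/-- The pre-game `0 = { | }`. -/
instance PGame.instZero : Zero PGame :=
  ⟨⟨PEmpty, PEmpty, PEmpty.elim, PEmpty.elim⟩⟩

end SetTheory

/-- Combinatorial games over a poset `A` of atoms: either an atomic game `[a]` for an atom
`a : A`, or a composite game `⟨L|R⟩` where `L` and `R` are nonempty families of games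
(the left and right options). -/
inductive PoGame (A : Type u) : Type (u + 1) where
  | atom : A → PoGame A
  | mk : (xl xr : Type u) → (xl → PoGame A) → (xr → PoGame A) →
      Nonempty xl → Nonempty xr → PoGame A

namespace PoGame

variable {A : Type u}

/-- `G` is an atomic game. -/
def IsAtomic : PoGame A → Prop
  | atom _ => True
  | mk _ _ _ _ _ _ => False

/-- `G` is a left option of the game given as second argument. -/
def IsLeftOption (G : PoGame A) : PoGame A → Prop
  | atom _ => False
  | mk _ _ L _ _ _ => ∃ i, L i = G

/-- `G` is a right option of the game given as second argument. -/
def IsRightOption (G : PoGame A) : PoGame A → Prop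
  | atom _ => False
  | mk _ _ _ R _ _ => ∃ j, R j = G

section Order

variable [PartialOrder A]

mutual
  /-- `Le G H` is the relation `G ≤ H` on games over the poset `A`, defined by mutual
  recursion with `Lf` (the relation `G ⊲ H`): `G ≤ H` iff every left option `G^L`
  satisfies `G^L ⊲ H`, every right option `H^R` satisfies `G ⊲ H^R`, and if `G` or `H`
  is atomic then `G ⊲ H`. -/
  inductive Le : PoGame A → PoGame A → Prop
    | intro (G H : PoGame A)
        (hL : ∀ G', IsLeftOption G' G → Lf G' H)
        (hR : ∀ H', IsRightOption H' H → Lf G H')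
        (hA : IsAtomic G ∨ IsAtomic H → Lf G H) : Le G H

  /-- `Lf G H` is the relation `G ⊲ H` on games over the poset `A`: it holds iff some
  right option `G^R` satisfies `G^R ≤ H`, or some left option `H^L` satisfies `G ≤ H^L`,
  or `G = [a]` and `H = [b]` are atomic with `a ≤ b` in `A`. -/
  inductive Lf : PoGame A → PoGame A → Prop
    | rightOption (G H G' : PoGame A) (h : IsRightOption G' G) (hle : Le G' H) : Lf G H
    | leftOption (G H H' : PoGame A) (h : IsLeftOption H' H) (hle : Le G H') : Lf G H
    | atom (a b : A) (hab : a ≤ b) : Lf (atom a) (atom b)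
end

/-- Two games are equivalent if `G ≤ H` and `H ≤ G`. -/
def GEquiv (G H : PoGame A) : Prop := Le G H ∧ Le H G

/-- `G` is locally monotone if `G ≤ G^L` for every left option `G^L` and `G^R ≤ G` for
every right option `G^R`. -/
def LocallyMonotone (G : PoGame A) : Prop :=
  (∀ G', IsLeftOption G' G → Le G G') ∧ (∀ G', IsRightOption G' G → Le G' G)

/-- `G` is an option (left or right) of `H`. -/
def IsOption (G H : PoGame A) : Prop := IsLeftOption G H ∨ IsRightOption G H

/-- `G` is a position of `H`: `H` itself, an option of `H`, an option of an option, etc. -/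
def IsPosition (G H : PoGame A) : Prop := Relation.ReflTransGen IsOption G H

/-- `G` is monotone if every position of `G` is locally monotone. -/
def Monotone (G : PoGame A) : Prop := ∀ K, IsPosition K G → LocallyMonotone K

end Order

/-- The 5-element linearly ordered set `L5 = {-3, -2, -1, 0, 1}`. -/
abbrev L5 : Type := {a : ℤ // -3 ≤ a ∧ a ≤ 1}

/-- `G` has mean `C`: an atomic game `[a]` has mean `a`, and a composite game has mean `C`
iff every left option has mean `C + 1` and every right option has mean `C - 1`. -/
def HasMean : PoGame L5 → ℤ → Prop
  | atom a, C => (a : ℤ) = C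
  | mk _ _ L R _ _, C => (∀ i, HasMean (L i) (C + 1)) ∧ (∀ j, HasMean (R j) (C - 1))

/-- The game `⟨G | H⟩` with a single left option `G` and a single right option `H`. -/
def ofPair (G H : PoGame A) : PoGame A :=
  mk PUnit PUnit (fun _ => G) (fun _ => H) ⟨PUnit.unit⟩ ⟨PUnit.unit⟩

/-- `⋆ = ⟨-1 | -3⟩`. -/
def star : PoGame L5 := ofPair (atom ⟨-1, by norm_num⟩) (atom ⟨-3, by norm_num⟩)

/-- `M(G) = ⟨1 | G⟩`. -/
def M (G : PoGame L5) : PoGame L5 := ofPair (atom ⟨1, by norm_num⟩) G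

/-- `P(G) = ⟨G | -2⟩`. -/
def P (G : PoGame L5) : PoGame L5 := ofPair G (atom ⟨-2, by norm_num⟩)

/-- `P⋆(G) = ⟨G | ⋆⟩`. -/
def Pstar (G : PoGame L5) : PoGame L5 := ofPair G star

/-- `Pn n G = P G` if `n` is odd, `P⋆ G` if `n` is even. -/
def Pn (n : ℕ) (G : PoGame L5) : PoGame L5 := if Odd n then P G else Pstar G

/-- The sequence `G_0 = [0]`, `G_{n+1} = M (Pn n (G_n))`. -/
def Gseq : ℕ → PoGame L5
  | 0 => atom ⟨0, by norm_num⟩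
  | n + 1 => M (Pn n (Gseq n))

/-- The normal-play game obtained from a game over `L5` by replacing every atom by the
normal-play game `0 = { | }`, keeping the tree of left and right options. -/
def np : PoGame L5 → SetTheory.PGame.{0}
  | atom _ => 0
  | mk xl xr L R _ _ => SetTheory.PGame.mk xl xr (fun i => np (L i)) (fun j => np (R j))

end PoGame

/-! Both inequalities already fail at the first move. For odd `n`, `P(G_n) ≤ P⋆(G_{n-1})` needs
`P(G_n) ⊲ ⋆`, that is `[-2] ≤ ⋆` (impossible, as `-2 ≰ -3`) or `P(G_n) ≤ [-1]`, which needs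
`G_n ⊲ [-1]`. The latter fails for every `n`: `G_{n+1} ⊲ [-1]` forces `Pn(G_n) ≤ [-1]`, hence
`G_n ⊲ [-1]`, down to `[0] ⊲ [-1]`. For even `n`, `P⋆(G_n) ≤ P(G_{n-1})` needs `⋆ ≤ [-2]`, hence
`-1 ≤ -2`. -/

namespace PoGame

section General

variable {A : Type u} {G H G₁ G₂ : PoGame A}

theorem isLeftOption_ofPair (G₁ G₂ : PoGame A) : IsLeftOption G₁ (ofPair G₁ G₂) :=
  ⟨PUnit.unit, rfl⟩

theorem isRightOption_ofPair (G₁ G₂ : PoGame A) : IsRightOption G₂ (ofPair G₁ G₂) :=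
  ⟨PUnit.unit, rfl⟩

variable [PartialOrder A]

theorem Le.lf_of_isLeftOption {G' : PoGame A} (h : Le G H) (hG' : IsLeftOption G' G) :
    Lf G' H := by
  cases h with
  | intro _ _ hL _ _ => exact hL G' hG'

theorem Le.lf_of_isRightOption {H' : PoGame A} (h : Le G H) (hH' : IsRightOption H' H) :
    Lf G H' := by
  cases h with
  | intro _ _ _ hR _ => exact hR H' hH'

theorem lf_atom_atom_iff {a b : A} : Lf (atom a) (atom b) ↔ a ≤ b := by
  refine ⟨fun h => ?_, Lf.atom a b⟩
  cases h with
  | rightOption _ _ _ h _ => exact h.elim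
  | leftOption _ _ _ h _ => exact h.elim
  | atom _ _ hab => exact hab

theorem ofPair_lf_atom_iff {b : A} : Lf (ofPair G₁ G₂) (atom b) ↔ Le G₂ (atom b) := by
  refine ⟨fun h => ?_, Lf.rightOption _ _ G₂ (isRightOption_ofPair G₁ G₂)⟩
  cases h with
  | rightOption _ _ _ h hle => obtain ⟨_, rfl⟩ := h; exact hle
  | leftOption _ _ _ h _ => exact h.elim

theorem ofPair_lf_ofPair_iff {H₁ H₂ : PoGame A} :
    Lf (ofPair G₁ G₂) (ofPair H₁ H₂) ↔ Le G₂ (ofPair H₁ H₂) ∨ Le (ofPair G₁ G₂) H₁ := by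
  refine ⟨fun h => ?_, ?_⟩
  · cases h with
    | rightOption _ _ _ h hle => obtain ⟨_, rfl⟩ := h; exact .inl hle
    | leftOption _ _ _ h hle => obtain ⟨_, rfl⟩ := h; exact .inr hle
  · rintro (hle | hle)
    · exact Lf.rightOption _ _ G₂ (isRightOption_ofPair G₁ G₂) hle
    · exact Lf.leftOption _ _ H₁ (isLeftOption_ofPair H₁ H₂) hle

end General

theorem Pn_of_odd {n : ℕ} (hn : Odd n) (G : PoGame L5) : Pn n G = P G := if_pos hn

theorem Pn_of_even {n : ℕ} (hn : Even n) (G : PoGame L5) : Pn n G = Pstar G :=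
  if_neg (Nat.not_odd_iff_even.mpr hn)

theorem isLeftOption_Pn (n : ℕ) (G : PoGame L5) : IsLeftOption G (Pn n G) := by
  unfold Pn
  split <;> exact isLeftOption_ofPair _ _

theorem not_Gseq_lf_atom {b : L5} (hb : b < ⟨0, by norm_num⟩) :
    ∀ n, ¬ Lf (Gseq n) (atom b)
  | 0 => by rw [Gseq, lf_atom_atom_iff]; exact hb.not_ge
  | n + 1 => fun h =>
    have hle : Le (Pn n (Gseq n)) (atom b) := ofPair_lf_atom_iff.mp h
    not_Gseq_lf_atom hb n (hle.lf_of_isLeftOption (isLeftOption_Pn n _))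

theorem not_P_le_Pstar {G H : PoGame L5} (hG : ¬ Lf G (atom ⟨-1, by norm_num⟩)) :
    ¬ Le (P G) (Pstar H) := by
  intro h
  have hstar : Lf (P G) star := h.lf_of_isRightOption (isRightOption_ofPair H star)
  rcases ofPair_lf_ofPair_iff.mp hstar with hle | hle
  · have hlf := hle.lf_of_isRightOption (isRightOption_ofPair _ _)
    exact absurd (lf_atom_atom_iff.mp hlf) (by decide)
  · exact hG (hle.lf_of_isLeftOption (isLeftOption_ofPair G _))

theorem not_Pstar_le_P {G H : PoGame L5} : ¬ Le (Pstar G) (P H) := by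
  intro h
  have hstar : Le star (atom ⟨-2, by norm_num⟩) :=
    ofPair_lf_atom_iff.mp (h.lf_of_isRightOption (isRightOption_ofPair H _))
  have hlf := hstar.lf_of_isLeftOption (isLeftOption_ofPair _ _)
  exact absurd (lf_atom_atom_iff.mp hlf) (by decide)

end PoGame

open PoGame in
/-- For every natural number `n ≥ 1`, it is not the case that
`Pn(G_n) ≤ P_{n-1}(G_{n-1})`. -/
theorem stmt_10 (n : ℕ) (hn : 1 ≤ n) :
    ¬ Le (Pn n (Gseq n)) (Pn (n - 1) (Gseq (n - 1))) := by
  obtain ⟨m, rfl⟩ := Nat.exists_eq_add_of_le' hn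
  rw [Nat.add_sub_cancel]
  rcases Nat.even_or_odd m with hm | hm
  · rw [Pn_of_odd hm.add_one, Pn_of_even hm]
    exact not_P_le_Pstar (not_Gseq_lf_atom (by decide) _)
  · rw [Pn_of_even hm.add_one, Pn_of_odd hm]
    exact not_Pstar_le_P
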